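/- arXiv:2504.09707 — 3 statements merged into one kernel-verified Lean document; each statement's English description precedes it below -/
import Mathlib

section
/- If X1 and X2 are conditionally independent given U (i.e. I(X1; X2 | U) = 0), and f1, f2 are functions with f1(X1) = f2(X2) almost surely, then I(f1(X1); f2(X2) | U) = 0. -/
open Real
open scoped BigOperators Classical

/-- The distribution (pushforward pmf) of a random variable `X` under the weight
function `p` on a finite sample space. -/
noncomputable def dist {Ω S : Type*} [Fintype Ω] (p : Ω → ℝ) (X : Ω → S) (s : S) : ℝ :=
  ∑ ω : Ω, if X ω = s then p ω else 0

/-- Shannon entropy of a finite-valued random variable. -/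
noncomputable def ent {Ω S : Type*} [Fintype Ω] [Fintype S] (p : Ω → ℝ) (X : Ω → S) : ℝ :=
  -∑ s : S, dist p X s * Real.log (dist p X s)

/-- Shannon conditional entropy `H(X | Y)`, via the chain rule. -/
noncomputable def condEnt {Ω S T : Type*} [Fintype Ω] [Fintype S] [Fintype T]
    (p : Ω → ℝ) (X : Ω → S) (Y : Ω → T) : ℝ :=
  ent p (fun ω => (X ω, Y ω)) - ent p Y

/-- Shannon mutual information `I(X; Y)`. -/
noncomputable def mutInfo {Ω S T : Type*} [Fintype Ω] [Fintype S] [Fintype T]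
    (p : Ω → ℝ) (X : Ω → S) (Y : Ω → T) : ℝ :=
  ent p X + ent p Y - ent p (fun ω => (X ω, Y ω))

/-- Conditional mutual information `I(X; Y | Z)`. -/
noncomputable def condMutInfo {Ω S T V : Type*} [Fintype Ω] [Fintype S] [Fintype T] [Fintype V]
    (p : Ω → ℝ) (X : Ω → S) (Y : Ω → T) (Z : Ω → V) : ℝ :=
  ent p (fun ω => (X ω, Z ω)) + ent p (fun ω => (Y ω, Z ω))
    - ent p (fun ω => (X ω, Y ω, Z ω)) - ent p Z

/-- `p` is a probability mass function on the finite sample space. -/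
def IsPMF {Ω : Type*} [Fintype Ω] (p : Ω → ℝ) : Prop :=
  (∀ ω, 0 ≤ p ω) ∧ ∑ ω : Ω, p ω = 1

/-- Equality `p`-almost surely. -/
def AEEq {Ω S : Type*} (p : Ω → ℝ) (f g : Ω → S) : Prop :=
  ∀ ω, p ω ≠ 0 → f ω = g ω

/-- Kullback–Leibler divergence between two pmfs on a finite type. -/
noncomputable def klDiv {A : Type*} [Fintype A] (q r : A → ℝ) : ℝ :=
  ∑ a : A, q a * Real.log (q a / r a)

section helpers
set_option linter.unusedSectionVars false
variable {Ω S T V S' : Type*} [Fintype Ω] [Fintype S] [Fintype T] [Fintype V] [Fintype S']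

lemma dist_nn (p : Ω → ℝ) (hp : ∀ ω, 0 ≤ p ω) (X : Ω → S) (s : S) :
    0 ≤ dist p X s :=
  Finset.sum_nonneg fun ω _ => by split <;> simp [hp ω]

lemma dist_sum_fst' (p : Ω → ℝ) (F : Ω → S) (G : Ω → T) (t : T) :
    ∑ s : S, dist p (fun ω => (F ω, G ω)) (s, t) = dist p G t := by
  unfold _root_.dist
  rw [Finset.sum_comm]
  refine Finset.sum_congr rfl fun ω _ => ?_
  by_cases h : G ω = t <;> simp [Prod.ext_iff, h]

lemma dist_sum_mid' (p : Ω → ℝ) (F : Ω → S) (G : Ω → T) (H : Ω → V) (a : S) (u : V) :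
    ∑ b : T, dist p (fun ω => (F ω, G ω, H ω)) (a, b, u) = dist p (fun ω => (F ω, H ω)) (a, u) := by
  unfold _root_.dist
  rw [Finset.sum_comm]
  refine Finset.sum_congr rfl fun ω _ => ?_
  by_cases h1 : F ω = a <;> by_cases h2 : H ω = u <;> simp [Prod.ext_iff, h1, h2]

lemma ent_comp' (p : Ω → ℝ) (X : Ω → S) (g : S → T) (hg : Function.Injective g) :
    ent p (fun ω => g (X ω)) = ent p X := by
  have hdist : ∀ s, dist p (fun ω => g (X ω)) (g s) = dist p X s := by
    intro s
    unfold _root_.dist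
    exact Finset.sum_congr rfl fun ω _ => by simp [hg.eq_iff]
  have h0 : ∀ t ∉ Finset.univ.image g, dist p (fun ω => g (X ω)) t = 0 := by
    intro t ht
    unfold _root_.dist
    refine Finset.sum_eq_zero fun ω _ => ?_
    rw [if_neg]
    exact fun h => ht (Finset.mem_image.2 ⟨X ω, Finset.mem_univ _, h⟩)
  unfold _root_.ent
  congr 1
  rw [← Finset.sum_subset (Finset.subset_univ (Finset.univ.image g))
    (fun t _ ht => by rw [h0 t ht, zero_mul]),
    Finset.sum_image (fun a _ b _ h => hg h)]
  exact Finset.sum_congr rfl fun s _ => by rw [hdist]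

lemma key_ineq (t x y z : ℝ) (ht : 0 ≤ t) (hx : t ≤ x) (hy : t ≤ y) (hz : x ≤ z) :
    t - x * y / z ≤ t * (Real.log t + Real.log z - Real.log x - Real.log y) := by
  rcases ht.eq_or_lt with h | h
  · rw [← h]
    have : 0 ≤ x * y / z := by
      apply div_nonneg (mul_nonneg (h ▸ hx) (h ▸ hy)) (le_trans (h ▸ hx) hz)
    simp; linarith
  · have hx0 : 0 < x := lt_of_lt_of_le h hx
    have hy0 : 0 < y := lt_of_lt_of_le h hy
    have hz0 : 0 < z := lt_of_lt_of_le hx0 hz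
    have hl := Real.log_le_sub_one_of_pos (show (0:ℝ) < x * y / (t * z) by positivity)
    rw [Real.log_div (by positivity) (by positivity), Real.log_mul hx0.ne' hy0.ne',
      Real.log_mul h.ne' hz0.ne'] at hl
    have h2 : 1 - x * y / (t * z) ≤ Real.log t + Real.log z - Real.log x - Real.log y := by
      linarith
    have h3 := mul_le_mul_of_nonneg_left h2 ht
    have h4 : t * (1 - x * y / (t * z)) = t - x * y / z := by
      field_simp
    linarith

lemma abstract_nonneg (q3 : S → T → V → ℝ) (qa : S → V → ℝ) (qb : T → V → ℝ) (qu : V → ℝ)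
    (h3 : ∀ a b u, 0 ≤ q3 a b u)
    (ha : ∀ a u, qa a u = ∑ b, q3 a b u)
    (hb : ∀ b u, qb b u = ∑ a, q3 a b u)
    (hu : ∀ u, qu u = ∑ a, ∑ b, q3 a b u) :
    0 ≤ (∑ a, ∑ b, ∑ u, q3 a b u * Real.log (q3 a b u)) + (∑ u, qu u * Real.log (qu u))
        - (∑ a, ∑ u, qa a u * Real.log (qa a u)) - (∑ b, ∑ u, qb b u * Real.log (qb b u)) := by
  have hqa_nn : ∀ a u, 0 ≤ qa a u := fun a u => by
    rw [ha]; exact Finset.sum_nonneg fun b _ => h3 a b u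
  have hqb_nn : ∀ b u, 0 ≤ qb b u := fun b u => by
    rw [hb]; exact Finset.sum_nonneg fun a _ => h3 a b u
  have hA : ∀ u, ∑ a, qa a u = qu u := fun u => by
    rw [hu]; exact Finset.sum_congr rfl fun a _ => ha a u
  have hB : ∀ u, ∑ b, qb b u = qu u := fun u => by
    rw [hu, Finset.sum_comm]; exact Finset.sum_congr rfl fun b _ => hb b u
  have h3a : ∀ a b u, q3 a b u ≤ qa a u := fun a b u => by
    rw [ha]; exact Finset.single_le_sum (fun b' _ => h3 a b' u) (Finset.mem_univ b)
  have h3b : ∀ a b u, q3 a b u ≤ qb b u := fun a b u => by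
    rw [hb]; exact Finset.single_le_sum (fun a' _ => h3 a' b u) (Finset.mem_univ a)
  have hau : ∀ a u, qa a u ≤ qu u := fun a u => by
    rw [← hA]; exact Finset.single_le_sum (fun a' _ => hqa_nn a' u) (Finset.mem_univ a)
  have key : ∀ a b u, q3 a b u - qa a u * qb b u / qu u
      ≤ q3 a b u * (Real.log (q3 a b u) + Real.log (qu u) - Real.log (qa a u)
        - Real.log (qb b u)) := fun a b u =>
    key_ineq _ _ _ _ (h3 a b u) (h3a a b u) (h3b a b u) (hau a u)
  have sum_le : ∑ a, ∑ b, ∑ u, (q3 a b u - qa a u * qb b u / qu u)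
      ≤ ∑ a, ∑ b, ∑ u, q3 a b u * (Real.log (q3 a b u) + Real.log (qu u)
        - Real.log (qa a u) - Real.log (qb b u)) := by
    refine Finset.sum_le_sum fun a _ => Finset.sum_le_sum fun b _ =>
      Finset.sum_le_sum fun u _ => key a b u
  have reorder : ∀ f : S → T → V → ℝ, ∑ a, ∑ b, ∑ u, f a b u = ∑ u, ∑ a, ∑ b, f a b u := by
    intro f
    calc ∑ a, ∑ b, ∑ u, f a b u
        = ∑ a, ∑ u, ∑ b, f a b u := Finset.sum_congr rfl fun a _ => Finset.sum_comm
      _ = ∑ u, ∑ a, ∑ b, f a b u := Finset.sum_comm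
  have l1 : ∑ a, ∑ b, ∑ u, q3 a b u = ∑ u, qu u := by
    rw [reorder]
    exact Finset.sum_congr rfl fun u _ => (hu u).symm
  have l2 : ∑ a, ∑ b, ∑ u, qa a u * qb b u / qu u = ∑ u, qu u := by
    rw [reorder]
    refine Finset.sum_congr rfl fun u _ => ?_
    have inner : ∀ a, ∑ b, qa a u * qb b u / qu u = qa a u * qu u / qu u := by
      intro a
      rw [← Finset.sum_div, ← Finset.mul_sum, hB]
    rw [Finset.sum_congr rfl fun a _ => inner a]
    rcases eq_or_ne (qu u) 0 with h | h
    · simp [h]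
    · rw [← Finset.sum_div, ← Finset.sum_mul, hA, mul_div_assoc, div_self h, mul_one]
  have left_zero : ∑ a, ∑ b, ∑ u, (q3 a b u - qa a u * qb b u / qu u) = 0 := by
    simp only [Finset.sum_sub_distrib]
    rw [l1, l2, sub_self]
  have r2 : ∑ a, ∑ b, ∑ u, q3 a b u * Real.log (qu u) = ∑ u, qu u * Real.log (qu u) := by
    rw [reorder]
    refine Finset.sum_congr rfl fun u _ => ?_
    rw [hu, Finset.sum_mul]
    exact Finset.sum_congr rfl fun a _ => (Finset.sum_mul _ _ _).symm
  have r3 : ∑ a, ∑ b, ∑ u, q3 a b u * Real.log (qa a u) = ∑ a, ∑ u, qa a u * Real.log (qa a u) := by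
    refine Finset.sum_congr rfl fun a _ => ?_
    rw [Finset.sum_comm]
    refine Finset.sum_congr rfl fun u _ => ?_
    rw [ha, Finset.sum_mul]
  have r4 : ∑ a, ∑ b, ∑ u, q3 a b u * Real.log (qb b u) = ∑ b, ∑ u, qb b u * Real.log (qb b u) := by
    rw [Finset.sum_comm]
    refine Finset.sum_congr rfl fun b _ => ?_
    rw [Finset.sum_comm]
    refine Finset.sum_congr rfl fun u _ => ?_
    rw [hb, Finset.sum_mul]
  have expand : ∑ a, ∑ b, ∑ u, q3 a b u * (Real.log (q3 a b u) + Real.log (qu u)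
        - Real.log (qa a u) - Real.log (qb b u))
      = (∑ a, ∑ b, ∑ u, q3 a b u * Real.log (q3 a b u))
        + (∑ a, ∑ b, ∑ u, q3 a b u * Real.log (qu u))
        - (∑ a, ∑ b, ∑ u, q3 a b u * Real.log (qa a u))
        - (∑ a, ∑ b, ∑ u, q3 a b u * Real.log (qb b u)) := by
    simp only [mul_add, mul_sub, Finset.sum_add_distrib, Finset.sum_sub_distrib]
  rw [left_zero, expand, r2, r3, r4] at sum_le
  linarith

lemma cmi_nonneg (p : Ω → ℝ) (hp : ∀ ω, 0 ≤ p ω) (A : Ω → S) (B : Ω → T) (U : Ω → V) :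
    0 ≤ condMutInfo p A B U := by
  have e : condMutInfo p A B U
      = (∑ a : S, ∑ b : T, ∑ u : V, dist p (fun ω => (A ω, B ω, U ω)) (a, b, u)
          * Real.log (dist p (fun ω => (A ω, B ω, U ω)) (a, b, u)))
        + (∑ u : V, dist p U u * Real.log (dist p U u))
        - (∑ a : S, ∑ u : V, dist p (fun ω => (A ω, U ω)) (a, u)
          * Real.log (dist p (fun ω => (A ω, U ω)) (a, u)))
        - (∑ b : T, ∑ u : V, dist p (fun ω => (B ω, U ω)) (b, u)
          * Real.log (dist p (fun ω => (B ω, U ω)) (b, u))) := by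
    unfold condMutInfo _root_.ent
    simp only [Fintype.sum_prod_type]
    ring
  rw [e]
  exact abstract_nonneg
    (fun a b u => dist p (fun ω => (A ω, B ω, U ω)) (a, b, u))
    (fun a u => dist p (fun ω => (A ω, U ω)) (a, u))
    (fun b u => dist p (fun ω => (B ω, U ω)) (b, u))
    (fun u => dist p U u)
    (fun a b u => dist_nn p hp _ _)
    (fun a u => (dist_sum_mid' p A B U a u).symm)
    (fun b u => (dist_sum_fst' p A (fun ω => (B ω, U ω)) (b, u)).symm)
    (fun u => by
      show dist p U u = ∑ a : S, ∑ b : T, dist p (fun ω => (A ω, B ω, U ω)) (a, b, u)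
      rw [← dist_sum_fst' p A U u]
      exact Finset.sum_congr rfl fun a _ => (dist_sum_mid' p A B U a u).symm)

lemma cmi_comm (p : Ω → ℝ) (A : Ω → S) (B : Ω → T) (U : Ω → V) :
    condMutInfo p A B U = condMutInfo p B A U := by
  unfold condMutInfo
  have h : ent p (fun ω => (B ω, A ω, U ω)) = ent p (fun ω => (A ω, B ω, U ω)) :=
    ent_comp' p (fun ω => (A ω, B ω, U ω)) (fun x => (x.2.1, x.1, x.2.2))
      (fun x y h => by
        simp only [Prod.ext_iff] at h ⊢
        exact ⟨h.2.1, h.1, h.2.2⟩)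
  rw [h]; ring

lemma dpi (p : Ω → ℝ) (hp : ∀ ω, 0 ≤ p ω) (A : Ω → S) (B : Ω → T) (U : Ω → V) (f : S → S') :
    condMutInfo p (fun ω => f (A ω)) B U ≤ condMutInfo p A B U := by
  have e1 : ent p (fun ω => (A ω, f (A ω), U ω)) = ent p (fun ω => (A ω, U ω)) :=
    ent_comp' p (fun ω => (A ω, U ω)) (fun x => (x.1, f x.1, x.2))
      (fun x y h => by
        simp only [Prod.ext_iff] at h ⊢
        exact ⟨h.1, h.2.2⟩)
  have e2 : ent p (fun ω => (B ω, f (A ω), U ω)) = ent p (fun ω => (f (A ω), B ω, U ω)) :=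
    (ent_comp' p (fun ω => (B ω, f (A ω), U ω)) (fun x => (x.2.1, x.1, x.2.2))
      (fun x y h => by
        simp only [Prod.ext_iff] at h ⊢
        exact ⟨h.2.1, h.1, h.2.2⟩)).symm
  have e3 : ent p (fun ω => (A ω, B ω, f (A ω), U ω)) = ent p (fun ω => (A ω, B ω, U ω)) :=
    ent_comp' p (fun ω => (A ω, B ω, U ω)) (fun x => (x.1, x.2.1, f x.1, x.2.2))
      (fun x y h => by
        simp only [Prod.ext_iff] at h ⊢
        exact ⟨h.1, h.2.1, h.2.2.2⟩)
  have key : condMutInfo p A B U - condMutInfo p (fun ω => f (A ω)) B U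
      = condMutInfo p A B (fun ω => (f (A ω), U ω)) := by
    unfold condMutInfo
    simp only []
    linarith [e1, e2, e3]
  have h2 := cmi_nonneg p hp A B (fun ω => (f (A ω), U ω))
  linarith

end helpers

theorem stmt3 {Ω S1 S2 SU T : Type*} [Fintype Ω] [Fintype S1] [Fintype S2]
    [Fintype SU] [Fintype T]
    (p : Ω → ℝ) (hp : IsPMF p) (X1 : Ω → S1) (X2 : Ω → S2) (U : Ω → SU)
    (hci : condMutInfo p X1 X2 U = 0)
    (f1 : S1 → T) (f2 : S2 → T)
    (heq : AEEq p (fun ω => f1 (X1 ω)) (fun ω => f2 (X2 ω))) :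
    condMutInfo p (fun ω => f1 (X1 ω)) (fun ω => f2 (X2 ω)) U = 0 := by
  obtain ⟨hp0, -⟩ := hp
  have h0 := cmi_nonneg p hp0 (fun ω => f1 (X1 ω)) (fun ω => f2 (X2 ω)) U
  have h1 : condMutInfo p (fun ω => f1 (X1 ω)) X2 U ≤ condMutInfo p X1 X2 U :=
    dpi p hp0 X1 X2 U f1
  have h2 : condMutInfo p (fun ω => f2 (X2 ω)) (fun ω => f1 (X1 ω)) U
      ≤ condMutInfo p X2 (fun ω => f1 (X1 ω)) U := dpi p hp0 X2 (fun ω => f1 (X1 ω)) U f2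
  have c1 := cmi_comm p (fun ω => f1 (X1 ω)) (fun ω => f2 (X2 ω)) U
  have c2 := cmi_comm p X2 (fun ω => f1 (X1 ω)) U
  linarith
end

section
/- (Backward direction of Proposition 1) Let X1, X2 be random variables, and suppose there exists W = g1(X1) = g2(X2) almost surely such that X1 and X2 are conditionally independent given W. Let U = s1(X1) = s2(X2) almost surely. If for every pair of functions f1, f2 with f1(X1) = f2(X2) a.s. there exists f with f(U) = f1(X1) a.s., then W is a function of U almost surely and U is a function of W almost surely (i.e. there is a one-to-one correspondence between W and U up to null sets); in particular X1 and X2 are conditionally independent given U. -/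
open Real
open scoped BigOperators Classical

section Aux

variable {Ω : Type} [Fintype Ω] (p : Ω → ℝ)

lemma dist_congr {S : Type} {Y Y' : Ω → S} (h : AEEq p Y Y') : dist p Y = dist p Y' := by
  funext s
  unfold _root_.dist
  apply Finset.sum_congr rfl
  intro ω _
  by_cases hω : p ω = 0
  · simp [hω]
  · rw [h ω hω]

lemma ent_congr {S : Type} [Fintype S] {Y Y' : Ω → S} (h : AEEq p Y Y') :
    ent p Y = ent p Y' := by
  unfold ent; rw [dist_congr p h]

lemma dist_graph {A B : Type} (Y : Ω → A) (φ : A → B) (a : A) (b : B) :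
    dist p (fun ω => (Y ω, φ (Y ω))) (a, b) = if φ a = b then dist p Y a else 0 := by
  unfold _root_.dist
  by_cases hb : φ a = b
  · simp only [hb, if_true]
    apply Finset.sum_congr rfl
    intro ω _
    by_cases hy : Y ω = a
    · simp [hy, hb]
    · simp [hy, Prod.ext_iff]
  · simp only [hb, if_false]
    apply Finset.sum_eq_zero
    intro ω _
    rw [if_neg]
    intro h
    obtain ⟨h1, h2⟩ := Prod.mk.injEq _ _ _ _ ▸ h
    exact hb (h1 ▸ h2)

lemma ent_graph {A B : Type} [Fintype A] [Fintype B] (Y : Ω → A) (φ : A → B) :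
    ent p (fun ω => (Y ω, φ (Y ω))) = ent p Y := by
  unfold ent
  congr 1
  rw [Fintype.sum_prod_type]
  apply Finset.sum_congr rfl
  intro a _
  rw [Finset.sum_eq_single (φ a)]
  · rw [dist_graph, if_pos rfl]
  · intro b _ hb
    rw [dist_graph, if_neg (fun h => hb h.symm), zero_mul]
  · intro h; exact absurd (Finset.mem_univ _) h

lemma ent_swap {A B : Type} [Fintype A] [Fintype B] (Y : Ω → A) (Z : Ω → B) :
    ent p (fun ω => (Y ω, Z ω)) = ent p (fun ω => (Z ω, Y ω)) := by
  unfold ent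
  congr 1
  rw [← Equiv.sum_comp (Equiv.prodComm B A)]
  apply Finset.sum_congr rfl
  intro x _
  have : dist p (fun ω => (Y ω, Z ω)) ((Equiv.prodComm B A) x) =
      dist p (fun ω => (Z ω, Y ω)) x := by
    unfold _root_.dist
    apply Finset.sum_congr rfl
    intro ω _
    simp [Prod.ext_iff, and_comm]
  rw [this]

lemma ent_of_mutual {A B : Type} [Fintype A] [Fintype B] (Y : Ω → A) (Z : Ω → B)
    (φ : A → B) (ψ : B → A)
    (h1 : AEEq p Z (fun ω => φ (Y ω))) (h2 : AEEq p Y (fun ω => ψ (Z ω))) :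
    ent p Y = ent p Z := by
  have e1 : ent p (fun ω => (Y ω, Z ω)) = ent p Y := by
    rw [ent_congr p (Y' := fun ω => (Y ω, φ (Y ω)))
      (fun ω hω => by rw [h1 ω hω])]
    exact ent_graph p Y φ
  have e2 : ent p (fun ω => (Z ω, Y ω)) = ent p Z := by
    rw [ent_congr p (Y' := fun ω => (Z ω, ψ (Z ω)))
      (fun ω hω => by rw [h2 ω hω])]
    exact ent_graph p Z ψ
  rw [← e1, ent_swap, e2]

lemma dist_nonneg' (hp0 : ∀ ω, 0 ≤ p ω) {S : Type} (Y : Ω → S) (s : S) :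
    0 ≤ dist p Y s := by
  apply Finset.sum_nonneg
  intro ω _
  split_ifs
  · exact hp0 ω
  · exact le_refl 0

lemma le_dist (hp0 : ∀ ω, 0 ≤ p ω) {S : Type} (Y : Ω → S) (ω : Ω) :
    p ω ≤ dist p Y (Y ω) := by
  have := Finset.single_le_sum (f := fun ω' => if Y ω' = Y ω then p ω' else 0)
    (fun i _ => by
      split_ifs
      · exact hp0 i
      · exact le_refl 0) (Finset.mem_univ ω)
  simpa [_root_.dist] using this

lemma dist_witness {S : Type} {Y : Ω → S} {s : S} (h : dist p Y s ≠ 0) :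
    ∃ ω, p ω ≠ 0 ∧ Y ω = s := by
  by_contra hc
  push_neg at hc
  apply h
  apply Finset.sum_eq_zero
  intro ω _
  by_cases hy : Y ω = s
  · rw [if_pos hy]
    by_contra hp0
    exact hc ω hp0 hy
  · rw [if_neg hy]

lemma marg_fst {A B : Type} [Fintype A] (X : Ω → A) (Y : Ω → B) (y : B) :
    ∑ x : A, dist p (fun ω => (X ω, Y ω)) (x, y) = dist p Y y := by
  unfold _root_.dist
  rw [Finset.sum_comm]
  apply Finset.sum_congr rfl
  intro ω _
  simp only [Prod.mk.injEq]
  by_cases hy : Y ω = y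
  · simp [hy]
  · simp [hy]

lemma marg_snd3 {A B C : Type} [Fintype B] (X : Ω → A) (Y : Ω → B) (Z : Ω → C)
    (a : A) (c : C) :
    ∑ b : B, dist p (fun ω => (X ω, Y ω, Z ω)) (a, b, c) =
      dist p (fun ω => (X ω, Z ω)) (a, c) := by
  unfold _root_.dist
  rw [Finset.sum_comm]
  apply Finset.sum_congr rfl
  intro ω _
  simp only [Prod.mk.injEq]
  by_cases ha : X ω = a <;> by_cases hc : Z ω = c <;> simp [ha, hc]

lemma marg_fst3 {A B C : Type} [Fintype A] (X : Ω → A) (Y : Ω → B) (Z : Ω → C)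
    (b : B) (c : C) :
    ∑ a : A, dist p (fun ω => (X ω, Y ω, Z ω)) (a, b, c) =
      dist p (fun ω => (Y ω, Z ω)) (b, c) := by
  unfold _root_.dist
  rw [Finset.sum_comm]
  apply Finset.sum_congr rfl
  intro ω _
  simp only [Prod.mk.injEq]
  by_cases hb : Y ω = b <;> by_cases hc : Z ω = c <;> simp [hb, hc]

end Aux

lemma gibbs_term {q r : ℝ} (hq : 0 ≤ q) (hr : 0 ≤ r) (habs : r = 0 → q = 0) :
    q - r ≤ q * Real.log (q / r) ∧
      (q * Real.log (q / r) = q - r → q = r) := by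
  rcases eq_or_lt_of_le hq with h0 | hqpos
  · constructor
    · simp [← h0]; exact hr
    · intro h; simp [← h0] at h ⊢; linarith
  · have hrpos : 0 < r := by
      rcases eq_or_lt_of_le hr with h0 | h; · exact absurd (habs h0.symm) (ne_of_gt hqpos)
      · exact h
    have hx : 0 < r / q := div_pos hrpos hqpos
    have hlog : Real.log (q / r) = - Real.log (r / q) := by
      rw [← Real.log_inv]; congr 1; field_simp
    constructor
    · have := Real.log_le_sub_one_of_pos hx
      have h2 : q * Real.log (q / r) = - (q * Real.log (r / q)) := by rw [hlog]; ring
      rw [h2]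
      have h3 : q * Real.log (r / q) ≤ q * (r / q - 1) := by
        apply mul_le_mul_of_nonneg_left this hq
      have h4 : q * (r / q - 1) = r - q := by field_simp
      linarith
    · intro heq
      by_contra hne
      have hne1 : r / q ≠ 1 := by
        intro h
        apply hne
        field_simp at h
        linarith
      have := Real.log_lt_sub_one_of_pos hx hne1
      have h3 : q * Real.log (r / q) < q * (r / q - 1) :=
        mul_lt_mul_of_pos_left this hqpos
      have h4 : q * (r / q - 1) = r - q := by field_simp
      have h2 : q * Real.log (q / r) = - (q * Real.log (r / q)) := by rw [hlog]; ring
      rw [h2] at heq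
      linarith

lemma gibbs {ι : Type} [Fintype ι] (q r : ι → ℝ) (hq : ∀ i, 0 ≤ q i) (hr : ∀ i, 0 ≤ r i)
    (habs : ∀ i, r i = 0 → q i = 0) (hsum : ∑ i, q i = ∑ i, r i) :
    0 ≤ ∑ i, q i * Real.log (q i / r i) ∧
      (∑ i, q i * Real.log (q i / r i) = 0 → ∀ i, q i = r i) := by
  have hterm := fun i => gibbs_term (hq i) (hr i) (habs i)
  have hle : ∑ i, (q i - r i) ≤ ∑ i, q i * Real.log (q i / r i) :=
    Finset.sum_le_sum (fun i _ => (hterm i).1)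
  have hzero : ∑ i, (q i - r i) = 0 := by rw [Finset.sum_sub_distrib, hsum]; ring
  constructor
  · linarith
  · intro heq
    have key : ∀ i ∈ Finset.univ, q i * Real.log (q i / r i) - (q i - r i) = 0 := by
      apply (Finset.sum_eq_zero_iff_of_nonneg ?_).mp
      · rw [Finset.sum_sub_distrib, heq, hzero]; ring
      · intro i _
        have := (hterm i).1
        linarith
    intro i
    have h := key i (Finset.mem_univ i)
    exact (hterm i).2 (by linarith)

lemma swap3 {α β γ : Type} [Fintype α] [Fintype β] [Fintype γ] (f : α → β → γ → ℝ) :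
    ∑ c : γ, ∑ a : α, ∑ b : β, f a b c = ∑ a : α, ∑ b : β, ∑ c : γ, f a b c :=
  calc ∑ c : γ, ∑ a : α, ∑ b : β, f a b c = ∑ a : α, ∑ c : γ, ∑ b : β, f a b c :=
        Finset.sum_comm
    _ = ∑ a : α, ∑ b : β, ∑ c : γ, f a b c :=
        Finset.sum_congr rfl (fun a _ => Finset.sum_comm)

lemma cmi_identity {Ω S1 S2 SW : Type} [Fintype Ω] [Fintype S1] [Fintype S2] [Fintype SW]
    (p : Ω → ℝ) (X1 : Ω → S1) (X2 : Ω → S2) (W : Ω → SW) :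
    condMutInfo p X1 X2 W =
      ∑ w : SW, ∑ x1 : S1, ∑ x2 : S2,
        dist p (fun ω => (X1 ω, X2 ω, W ω)) (x1, x2, w) *
          (Real.log (dist p (fun ω => (X1 ω, X2 ω, W ω)) (x1, x2, w))
            + Real.log (dist p W w)
            - Real.log (dist p (fun ω => (X1 ω, W ω)) (x1, w))
            - Real.log (dist p (fun ω => (X2 ω, W ω)) (x2, w))) := by
  unfold condMutInfo ent
  set A := dist p (fun ω => (X1 ω, X2 ω, W ω)) with hA
  set B := dist p (fun ω => (X1 ω, W ω)) with hB
  set C := dist p (fun ω => (X2 ω, W ω)) with hC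
  set D := dist p W with hD
  have hmargA : ∀ x1 w, ∑ x2 : S2, A (x1, x2, w) = B (x1, w) := fun x1 w =>
    marg_snd3 p X1 X2 W x1 w
  have hmargA1 : ∀ x2 w, ∑ x1 : S1, A (x1, x2, w) = C (x2, w) := fun x2 w =>
    marg_fst3 p X1 X2 W x2 w
  have hmargB : ∀ w, ∑ x1 : S1, B (x1, w) = D w := fun w => marg_fst p X1 W w
  have e1 : ∑ w : SW, ∑ x1 : S1, ∑ x2 : S2, A (x1, x2, w) * Real.log (A (x1, x2, w))
      = ∑ s : S1 × S2 × SW, A s * Real.log (A s) := by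
    rw [swap3]
    simp only [Fintype.sum_prod_type]
  have e2 : ∑ w : SW, ∑ x1 : S1, ∑ x2 : S2, A (x1, x2, w) * Real.log (D w)
      = ∑ w : SW, D w * Real.log (D w) := by
    apply Finset.sum_congr rfl
    intro w _
    have : ∀ x1, ∑ x2 : S2, A (x1, x2, w) * Real.log (D w) = B (x1, w) * Real.log (D w) := by
      intro x1
      rw [← Finset.sum_mul, hmargA]
    rw [Finset.sum_congr rfl (fun x1 _ => this x1), ← Finset.sum_mul, hmargB]
  have e3 : ∑ w : SW, ∑ x1 : S1, ∑ x2 : S2, A (x1, x2, w) * Real.log (B (x1, w))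
      = ∑ s : S1 × SW, B s * Real.log (B s) := by
    have h1 : ∀ w x1, ∑ x2 : S2, A (x1, x2, w) * Real.log (B (x1, w))
        = B (x1, w) * Real.log (B (x1, w)) := by
      intro w x1
      rw [← Finset.sum_mul, hmargA]
    rw [Finset.sum_congr rfl (fun w _ => Finset.sum_congr rfl (fun x1 _ => h1 w x1))]
    rw [Fintype.sum_prod_type]
    exact Finset.sum_comm
  have e4 : ∑ w : SW, ∑ x1 : S1, ∑ x2 : S2, A (x1, x2, w) * Real.log (C (x2, w))
      = ∑ s : S2 × SW, C s * Real.log (C s) := by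
    have h0 : ∀ w, ∑ x1 : S1, ∑ x2 : S2, A (x1, x2, w) * Real.log (C (x2, w))
        = ∑ x2 : S2, ∑ x1 : S1, A (x1, x2, w) * Real.log (C (x2, w)) :=
      fun w => Finset.sum_comm
    have h1 : ∀ w x2, ∑ x1 : S1, A (x1, x2, w) * Real.log (C (x2, w))
        = C (x2, w) * Real.log (C (x2, w)) := by
      intro w x2
      rw [← Finset.sum_mul, hmargA1]
    rw [Finset.sum_congr rfl (fun w _ => h0 w)]
    rw [Finset.sum_congr rfl (fun w _ => Finset.sum_congr rfl (fun x2 _ => h1 w x2))]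
    rw [Fintype.sum_prod_type]
    exact Finset.sum_comm
  simp only [mul_add, mul_sub, Finset.sum_add_distrib, Finset.sum_sub_distrib]
  rw [e1, e2, e3, e4]
  ring

lemma cmi_factorization {Ω S1 S2 SW : Type} [Fintype Ω] [Fintype S1] [Fintype S2] [Fintype SW]
    (p : Ω → ℝ) (hp : IsPMF p) (X1 : Ω → S1) (X2 : Ω → S2) (W : Ω → SW)
    (hciW : condMutInfo p X1 X2 W = 0) :
    ∀ x1 x2 w, dist p (fun ω => (X1 ω, X2 ω, W ω)) (x1, x2, w) * dist p W w =
      dist p (fun ω => (X1 ω, W ω)) (x1, w) * dist p (fun ω => (X2 ω, W ω)) (x2, w) := by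
  set A := dist p (fun ω => (X1 ω, X2 ω, W ω)) with hA
  set B := dist p (fun ω => (X1 ω, W ω)) with hB
  set C := dist p (fun ω => (X2 ω, W ω)) with hC
  set D := dist p W with hD
  have hA0 : ∀ s, 0 ≤ A s := fun s => dist_nonneg' p hp.1 _ s
  have hB0 : ∀ s, 0 ≤ B s := fun s => dist_nonneg' p hp.1 _ s
  have hC0 : ∀ s, 0 ≤ C s := fun s => dist_nonneg' p hp.1 _ s
  have hD0 : ∀ s, 0 ≤ D s := fun s => dist_nonneg' p hp.1 _ s
  have hmargA : ∀ x1 w, ∑ x2 : S2, A (x1, x2, w) = B (x1, w) := fun x1 w =>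
    marg_snd3 p X1 X2 W x1 w
  have hmargA1 : ∀ x2 w, ∑ x1 : S1, A (x1, x2, w) = C (x2, w) := fun x2 w =>
    marg_fst3 p X1 X2 W x2 w
  have hmargB : ∀ w, ∑ x1 : S1, B (x1, w) = D w := fun w => marg_fst p X1 W w
  have hmargC : ∀ w, ∑ x2 : S2, C (x2, w) = D w := fun w => marg_fst p X2 W w
  have hAB : ∀ x1 x2 w, A (x1, x2, w) ≤ B (x1, w) := by
    intro x1 x2 w
    rw [← hmargA x1 w]
    exact Finset.single_le_sum (f := fun x2 => A (x1, x2, w)) (fun i _ => hA0 _) (Finset.mem_univ x2)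
  have hAC : ∀ x1 x2 w, A (x1, x2, w) ≤ C (x2, w) := by
    intro x1 x2 w
    rw [← hmargA1 x2 w]
    exact Finset.single_le_sum (f := fun x1 => A (x1, x2, w)) (fun i _ => hA0 _) (Finset.mem_univ x1)
  have hBD : ∀ x1 w, B (x1, w) ≤ D w := by
    intro x1 w
    rw [← hmargB w]
    exact Finset.single_le_sum (f := fun x1 => B (x1, w)) (fun i _ => hB0 _) (Finset.mem_univ x1)
  have hCD : ∀ x2 w, C (x2, w) ≤ D w := by
    intro x2 w
    rw [← hmargC w]
    exact Finset.single_le_sum (f := fun x2 => C (x2, w)) (fun i _ => hC0 _) (Finset.mem_univ x2)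
  set T : SW → ℝ := fun w => ∑ x1 : S1, ∑ x2 : S2,
    A (x1, x2, w) * (Real.log (A (x1, x2, w)) + Real.log (D w)
      - Real.log (B (x1, w)) - Real.log (C (x2, w))) with hT
  have hident : condMutInfo p X1 X2 W = ∑ w : SW, T w := cmi_identity p X1 X2 W
  have hkey : ∀ w, 0 ≤ T w ∧
      (T w = 0 → ∀ x1 x2, A (x1, x2, w) * D w = B (x1, w) * C (x2, w)) := by
    intro w
    by_cases hDw : D w = 0
    · have hBz : ∀ x1, B (x1, w) = 0 := fun x1 =>
        le_antisymm (hDw ▸ hBD x1 w) (hB0 _)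
      have hAz : ∀ x1 x2, A (x1, x2, w) = 0 := fun x1 x2 =>
        le_antisymm ((hAB x1 x2 w).trans (le_of_eq (hBz x1))) (hA0 _)
      constructor
      · have : T w = 0 := by
          rw [hT]
          apply Finset.sum_eq_zero
          intro x1 _
          apply Finset.sum_eq_zero
          intro x2 _
          rw [hAz x1 x2, zero_mul]
        rw [this]
      · intro _ x1 x2
        rw [hAz x1 x2, hBz x1, zero_mul, zero_mul]
    · have hDpos : 0 < D w := lt_of_le_of_ne (hD0 w) (Ne.symm hDw)
      set q : S1 × S2 → ℝ := fun i => A (i.1, i.2, w) * D w with hq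
      set r : S1 × S2 → ℝ := fun i => B (i.1, w) * C (i.2, w) with hr
      have hq0 : ∀ i, 0 ≤ q i := fun i => mul_nonneg (hA0 _) (hD0 _)
      have hr0 : ∀ i, 0 ≤ r i := fun i => mul_nonneg (hB0 _) (hC0 _)
      have habs : ∀ i, r i = 0 → q i = 0 := by
        intro i hri
        rcases mul_eq_zero.mp hri with h | h
        · have : A (i.1, i.2, w) = 0 :=
            le_antisymm (h ▸ hAB i.1 i.2 w) (hA0 _)
          rw [hq]; simp [this]
        · have : A (i.1, i.2, w) = 0 :=
            le_antisymm (h ▸ hAC i.1 i.2 w) (hA0 _)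
          rw [hq]; simp [this]
      have hsum : ∑ i : S1 × S2, q i = ∑ i : S1 × S2, r i := by
        rw [hq, hr]
        rw [Fintype.sum_prod_type, Fintype.sum_prod_type]
        have l1 : ∑ x1 : S1, ∑ x2 : S2, A (x1, x2, w) * D w = D w * D w := by
          have : ∀ x1, ∑ x2 : S2, A (x1, x2, w) * D w = B (x1, w) * D w := by
            intro x1; rw [← Finset.sum_mul, hmargA]
          rw [Finset.sum_congr rfl (fun x1 _ => this x1), ← Finset.sum_mul, hmargB]
        have l2 : ∑ x1 : S1, ∑ x2 : S2, B (x1, w) * C (x2, w) = D w * D w := by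
          have : ∀ x1, ∑ x2 : S2, B (x1, w) * C (x2, w) = B (x1, w) * D w := by
            intro x1; rw [← Finset.mul_sum, hmargC]
          rw [Finset.sum_congr rfl (fun x1 _ => this x1), ← Finset.sum_mul, hmargB]
        rw [l1, l2]
      obtain ⟨hge, heqc⟩ := gibbs q r hq0 hr0 habs hsum
      have hrel : ∑ i : S1 × S2, q i * Real.log (q i / r i) = D w * T w := by
        rw [hT, Finset.mul_sum]
        rw [Fintype.sum_prod_type]
        apply Finset.sum_congr rfl
        intro x1 _
        rw [Finset.mul_sum]
        apply Finset.sum_congr rfl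
        intro x2 _
        by_cases hAz : A (x1, x2, w) = 0
        · rw [hq]; simp [hAz]
        · have hApos : 0 < A (x1, x2, w) := lt_of_le_of_ne (hA0 _) (Ne.symm hAz)
          have hBpos : 0 < B (x1, w) := lt_of_lt_of_le hApos (hAB x1 x2 w)
          have hCpos : 0 < C (x2, w) := lt_of_lt_of_le hApos (hAC x1 x2 w)
          have hlog : Real.log (q (x1, x2) / r (x1, x2)) =
              Real.log (A (x1, x2, w)) + Real.log (D w)
                - Real.log (B (x1, w)) - Real.log (C (x2, w)) := by
            rw [hq, hr]
            simp only
            rw [Real.log_div (mul_ne_zero (ne_of_gt hApos) hDw)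
              (mul_ne_zero (ne_of_gt hBpos) (ne_of_gt hCpos)),
              Real.log_mul (ne_of_gt hApos) hDw,
              Real.log_mul (ne_of_gt hBpos) (ne_of_gt hCpos)]
            ring
          rw [hlog, hq]
          simp only
          ring
      constructor
      · rw [hrel] at hge
        nlinarith [hge, hDpos]
      · intro hTz x1 x2
        have : ∑ i : S1 × S2, q i * Real.log (q i / r i) = 0 := by
          rw [hrel, hTz, mul_zero]
        have := heqc this (x1, x2)
        rw [hq, hr] at this
        exact this
  have hTz : ∀ w, T w = 0 := by
    have := (Finset.sum_eq_zero_iff_of_nonneg (fun w _ => (hkey w).1)).mp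
      (hident ▸ hciW)
    intro w
    exact this w (Finset.mem_univ w)
  intro x1 x2 w
  exact (hkey w).2 (hTz w) x1 x2

theorem stmt8 {Ω S1 S2 SW SU : Type} [Fintype Ω] [Fintype S1] [Fintype S2]
    [Fintype SW] [Fintype SU]
    (p : Ω → ℝ) (hp : IsPMF p) (X1 : Ω → S1) (X2 : Ω → S2)
    (W : Ω → SW) (g1 : S1 → SW) (g2 : S2 → SW)
    (hW1 : AEEq p W (fun ω => g1 (X1 ω)))
    (hW2 : AEEq p W (fun ω => g2 (X2 ω)))
    (hciW : condMutInfo p X1 X2 W = 0)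
    (U : Ω → SU) (s1 : S1 → SU) (s2 : S2 → SU)
    (hU1 : AEEq p U (fun ω => s1 (X1 ω)))
    (hU2 : AEEq p U (fun ω => s2 (X2 ω)))
    (hcommon : ∀ (T : Type) [Fintype T] (f1 : S1 → T) (f2 : S2 → T),
      AEEq p (fun ω => f1 (X1 ω)) (fun ω => f2 (X2 ω)) →
      ∃ f : SU → T, AEEq p (fun ω => f (U ω)) (fun ω => f1 (X1 ω))) :
    (∃ h : SU → SW, AEEq p W (fun ω => h (U ω))) ∧
    (∃ h' : SW → SU, AEEq p U (fun ω => h' (W ω))) ∧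
    condMutInfo p X1 X2 U = 0 := by
  -- Part 1: W is a function of U
  have hWc : AEEq p (fun ω => g1 (X1 ω)) (fun ω => g2 (X2 ω)) := by
    intro ω hω
    exact (hW1 ω hω).symm.trans (hW2 ω hω)
  obtain ⟨hf, hhf⟩ := hcommon SW g1 g2 hWc
  have hWU : AEEq p W (fun ω => hf (U ω)) := by
    intro ω hω
    exact (hW1 ω hω).trans (hhf ω hω).symm
  -- Part 2: U is a function of W
  have hfact := cmi_factorization p hp X1 X2 W hciW
  -- key claim: U is constant on each fiber of W (on the support)
  have hconst : ∀ ω ω', p ω ≠ 0 → p ω' ≠ 0 → W ω = W ω' → U ω = U ω' := by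
    intro ω ω' hω hω' hWW
    set w := W ω with hw
    have hDpos : dist p W w ≠ 0 := by
      have h1 := le_dist p hp.1 W ω
      have h2 := lt_of_le_of_ne (hp.1 ω) (Ne.symm hω)
      exact ne_of_gt (lt_of_lt_of_le h2 h1)
    have hBpos : dist p (fun ω'' => (X1 ω'', W ω'')) (X1 ω, w) ≠ 0 := by
      have h1 := le_dist p hp.1 (fun ω'' => (X1 ω'', W ω'')) ω
      have h2 := lt_of_le_of_ne (hp.1 ω) (Ne.symm hω)
      exact ne_of_gt (lt_of_lt_of_le h2 h1)
    have hCpos : dist p (fun ω'' => (X2 ω'', W ω'')) (X2 ω', w) ≠ 0 := by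
      have h1 := le_dist p hp.1 (fun ω'' => (X2 ω'', W ω'')) ω'
      have h2 := lt_of_le_of_ne (hp.1 ω') (Ne.symm hω')
      rw [← hWW] at h1
      exact ne_of_gt (lt_of_lt_of_le h2 h1)
    have hApos : dist p (fun ω'' => (X1 ω'', X2 ω'', W ω'')) (X1 ω, X2 ω', w) ≠ 0 := by
      intro hAz
      have := hfact (X1 ω) (X2 ω') w
      rw [hAz, zero_mul] at this
      rcases mul_eq_zero.mp this.symm with h | h
      · exact hBpos h
      · exact hCpos h
    obtain ⟨ω'', hω'', heq⟩ := dist_witness p hApos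
    have e1 : X1 ω'' = X1 ω := congrArg Prod.fst heq
    have e2 : X2 ω'' = X2 ω' := congrArg Prod.fst (congrArg Prod.snd heq)
    calc U ω = s1 (X1 ω) := hU1 ω hω
      _ = s1 (X1 ω'') := by rw [e1]
      _ = U ω'' := (hU1 ω'' hω'').symm
      _ = s2 (X2 ω'') := hU2 ω'' hω''
      _ = s2 (X2 ω') := by rw [e2]
      _ = U ω' := (hU2 ω' hω').symm
  have hΩne : ∃ ω0, p ω0 ≠ 0 := by
    by_contra hc
    push_neg at hc
    have h1 := hp.2
    rw [Finset.sum_eq_zero (fun ω _ => hc ω)] at h1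
    exact zero_ne_one h1
  obtain ⟨ω0, hω0⟩ := hΩne
  haveI : Nonempty SU := ⟨U ω0⟩
  set h' : SW → SU := fun w =>
    if h : ∃ ω, p ω ≠ 0 ∧ W ω = w then U h.choose else Classical.arbitrary SU with hh'
  have hUW : AEEq p U (fun ω => h' (W ω)) := by
    intro ω hω
    have hex : ∃ ω', p ω' ≠ 0 ∧ W ω' = W ω := ⟨ω, hω, rfl⟩
    show U ω = h' (W ω)
    rw [hh']
    simp only
    rw [dif_pos hex]
    exact hconst ω hex.choose hω hex.choose_spec.1 hex.choose_spec.2.symm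
  -- Part 3: conditional independence given U
  have eU : ent p U = ent p W := ent_of_mutual p U W hf h' hWU hUW
  have e1U : ent p (fun ω => (X1 ω, U ω)) = ent p (fun ω => (X1 ω, W ω)) := by
    apply ent_of_mutual p _ _ (fun q : S1 × SU => (q.1, hf q.2))
      (fun q : S1 × SW => (q.1, h' q.2))
    · intro ω hω
      show (X1 ω, W ω) = (X1 ω, hf (U ω))
      rw [show W ω = hf (U ω) from hWU ω hω]
    · intro ω hω
      show (X1 ω, U ω) = (X1 ω, h' (W ω))
      rw [show U ω = h' (W ω) from hUW ω hω]
  have e2U : ent p (fun ω => (X2 ω, U ω)) = ent p (fun ω => (X2 ω, W ω)) := by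
    apply ent_of_mutual p _ _ (fun q : S2 × SU => (q.1, hf q.2))
      (fun q : S2 × SW => (q.1, h' q.2))
    · intro ω hω
      show (X2 ω, W ω) = (X2 ω, hf (U ω))
      rw [show W ω = hf (U ω) from hWU ω hω]
    · intro ω hω
      show (X2 ω, U ω) = (X2 ω, h' (W ω))
      rw [show U ω = h' (W ω) from hUW ω hω]
  have e3U : ent p (fun ω => (X1 ω, X2 ω, U ω)) = ent p (fun ω => (X1 ω, X2 ω, W ω)) := by
    apply ent_of_mutual p _ _ (fun q : S1 × S2 × SU => (q.1, q.2.1, hf q.2.2))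
      (fun q : S1 × S2 × SW => (q.1, q.2.1, h' q.2.2))
    · intro ω hω
      show (X1 ω, X2 ω, W ω) = (X1 ω, X2 ω, hf (U ω))
      rw [show W ω = hf (U ω) from hWU ω hω]
    · intro ω hω
      show (X1 ω, X2 ω, U ω) = (X1 ω, X2 ω, h' (W ω))
      rw [show U ω = h' (W ω) from hUW ω hω]
  refine ⟨⟨hf, hWU⟩, ⟨h', hUW⟩, ?_⟩
  unfold condMutInfo at hciW ⊢
  rw [e1U, e2U, e3U, eU]
  exact hciW
end

section
/- For finite-valued random variables X1 and X2, if there exists a random variable W with W = g1(X1) = g2(X2) almost surely and I(X1; X2 | W) = 0, then W computes every common function of X1 and X2: for any f1, f2 with f1(X1) = f2(X2) almost surely there exists f such that f(W) = f1(X1) almost surely. -/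
open Real
open scoped BigOperators Classical

/-! `I(X₁; X₂ | W)` is the Kullback–Leibler divergence from the law `q` of `(X₁, X₂, W)` to the
coupling `q(x₁, w) q(x₂, w) / q(w)` with the same `(X₁, W)` and `(X₂, W)` marginals, so by Gibbs'
inequality it vanishes only if `q` is that coupling. Then two outcomes `ω, ω'` of positive weight
with `W ω = W ω'` can be spliced: some `ω''` of positive weight has `X₁ ω'' = X₁ ω` and
`X₂ ω'' = X₂ ω'`. Hence `f₁ (X₁ ω) = f₂ (X₂ ω'') = f₁ (X₁ ω')`, so `f₁ ∘ X₁` factors through `W`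
almost surely. -/

open Finset
open InformationTheory (klFun klFun_apply klFun_nonneg klFun_eq_zero_iff)

theorem eq_of_klDiv_eq_zero {A : Type*} [Fintype A] {q r : A → ℝ} (hq : ∀ a, 0 ≤ q a)
    (hr : ∀ a, 0 ≤ r a) (hqr : ∀ a, r a = 0 → q a = 0) (hsum : ∑ a, q a = ∑ a, r a)
    (h : klDiv q r = 0) : q = r := by
  have hterm : ∀ a, r a * klFun (q a / r a) = r a - q a + q a * log (q a / r a) := by
    intro a
    by_cases hra : r a = 0
    · simp [hra, hqr a hra]
    · rw [klFun_apply]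
      field_simp
      ring
  have hnonneg : ∀ a, 0 ≤ r a * klFun (q a / r a) :=
    fun a => mul_nonneg (hr a) (klFun_nonneg (div_nonneg (hq a) (hr a)))
  have hzero : ∑ a, r a * klFun (q a / r a) = 0 := by
    simp only [hterm, sum_add_distrib, sum_sub_distrib, hsum]
    simpa [klDiv] using h
  funext a
  have ha := (sum_eq_zero_iff_of_nonneg fun a _ => hnonneg a).1 hzero a (mem_univ a)
  by_cases hra : r a = 0
  · rw [hra, hqr a hra]
  · rwa [mul_eq_zero, or_iff_right hra,
      klFun_eq_zero_iff (div_nonneg (hq a) (hr a)), div_eq_one_iff_eq hra] at ha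

section Marginals

variable {α β γ : Type*} [Fintype α] [Fintype β] (q : α × β × γ → ℝ)

def margXZ (x : α × γ) : ℝ := ∑ b, q (x.1, b, x.2)

def margYZ (y : β × γ) : ℝ := ∑ a, q (a, y.1, y.2)

def margZ (c : γ) : ℝ := ∑ a, ∑ b, q (a, b, c)

noncomputable def condIndepCoupling (x : α × β × γ) : ℝ :=
  margXZ q (x.1, x.2.2) * margYZ q (x.2.1, x.2.2) / margZ q x.2.2

variable {q}

omit [Fintype α] in
theorem le_margXZ (hq : ∀ x, 0 ≤ q x) (a : α) (b : β) (c : γ) : q (a, b, c) ≤ margXZ q (a, c) :=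
  single_le_sum (f := fun b => q (a, b, c)) (fun _ _ => hq _) (mem_univ b)

omit [Fintype β] in
theorem le_margYZ (hq : ∀ x, 0 ≤ q x) (a : α) (b : β) (c : γ) : q (a, b, c) ≤ margYZ q (b, c) :=
  single_le_sum (f := fun a => q (a, b, c)) (fun _ _ => hq _) (mem_univ a)

theorem margXZ_le_margZ (hq : ∀ x, 0 ≤ q x) (a : α) (c : γ) : margXZ q (a, c) ≤ margZ q c :=
  single_le_sum (f := fun a => margXZ q (a, c)) (fun _ _ => sum_nonneg fun _ _ => hq _)
    (mem_univ a)

theorem sum_condIndepCoupling [Fintype γ] : ∑ x, condIndepCoupling q x = ∑ x, q x := by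
  simp only [Fintype.sum_prod_type_right]
  refine sum_congr rfl fun c _ => ?_
  have hYZ : ∑ b, margYZ q (b, c) = margZ q c := sum_comm
  calc ∑ b, ∑ a, condIndepCoupling q (a, b, c)
      = (∑ a, margXZ q (a, c)) * (∑ b, margYZ q (b, c)) / margZ q c := by
        rw [sum_mul_sum, sum_comm, sum_div]
        simp only [sum_div]
        rfl
    _ = margZ q c := by rw [hYZ]; exact mul_self_div_self _
    _ = ∑ b, ∑ a, q (a, b, c) := hYZ.symm

theorem condIndepCoupling_pos (hq : ∀ x, 0 ≤ q x) {x : α × β × γ} (hx : q x ≠ 0) :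
    0 < condIndepCoupling q x := by
  obtain ⟨a, b, c⟩ := x
  have hpos : 0 < q (a, b, c) := (hq _).lt_of_ne' hx
  have hXZ := hpos.trans_le (le_margXZ hq a b c)
  exact div_pos (mul_pos hXZ (hpos.trans_le (le_margYZ hq a b c)))
    (hXZ.trans_le (margXZ_le_margZ hq a c))

theorem condIndepCoupling_nonneg (hq : ∀ x, 0 ≤ q x) (x : α × β × γ) :
    0 ≤ condIndepCoupling q x :=
  div_nonneg (mul_nonneg (sum_nonneg fun _ _ => hq _) (sum_nonneg fun _ _ => hq _))
    (sum_nonneg fun _ _ => sum_nonneg fun _ _ => hq _)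

theorem klDiv_condIndepCoupling [Fintype γ] (hq : ∀ x, 0 ≤ q x) :
    klDiv q (condIndepCoupling q) = ∑ x, q x * (log (q x) + log (margZ q x.2.2)
      - log (margXZ q (x.1, x.2.2)) - log (margYZ q (x.2.1, x.2.2))) := by
  refine sum_congr rfl fun x _ => ?_
  obtain ⟨a, b, c⟩ := x
  by_cases hx : q (a, b, c) = 0
  · simp [hx]
  have hpos : 0 < q (a, b, c) := (hq _).lt_of_ne' hx
  have hXZ := hpos.trans_le (le_margXZ hq a b c)
  have hYZ := hpos.trans_le (le_margYZ hq a b c)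
  have hZ := hXZ.trans_le (margXZ_le_margZ hq a c)
  rw [log_div hx (condIndepCoupling_pos hq hx).ne', condIndepCoupling,
    log_div (mul_pos hXZ hYZ).ne' hZ.ne', log_mul hXZ.ne' hYZ.ne']
  ring

theorem mul_margZ_eq_of_klDiv_eq_zero [Fintype γ] (hq : ∀ x, 0 ≤ q x)
    (h : klDiv q (condIndepCoupling q) = 0) (a : α) (b : β) (c : γ) :
    q (a, b, c) * margZ q c = margXZ q (a, c) * margYZ q (b, c) := by
  have hcoupling := eq_of_klDiv_eq_zero hq (condIndepCoupling_nonneg hq)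
    (fun x hx => by_contra fun hqx => (condIndepCoupling_pos hq hqx).ne' hx)
    sum_condIndepCoupling.symm h
  rw [congrFun hcoupling (a, b, c), condIndepCoupling]
  by_cases hZ : margZ q c = 0
  · have hXZ : margXZ q (a, c) = 0 :=
      le_antisymm (hZ ▸ margXZ_le_margZ hq a c) (sum_nonneg fun _ _ => hq _)
    simp [hZ, hXZ]
  · exact div_mul_cancel₀ _ hZ

end Marginals

section Dist

variable {Ω S T V : Type*} [Fintype Ω] (p : Ω → ℝ)

theorem dist_nonneg_of_nonneg (hp : ∀ ω, 0 ≤ p ω) (X : Ω → S) (s : S) : 0 ≤ dist p X s :=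
  sum_nonneg fun ω _ => by split_ifs <;> simp [hp ω]

theorem le_dist_apply (hp : ∀ ω, 0 ≤ p ω) (X : Ω → S) (ω : Ω) : p ω ≤ dist p X (X ω) :=
  le_of_eq_of_le (if_pos rfl).symm <|
    single_le_sum (f := fun ω' => if X ω' = X ω then p ω' else 0)
      (fun ω' _ => by split_ifs <;> simp [hp ω']) (mem_univ ω)

theorem exists_of_dist_ne_zero {X : Ω → S} {s : S} (h : dist p X s ≠ 0) :
    ∃ ω, p ω ≠ 0 ∧ X ω = s := by
  obtain ⟨ω, -, hω⟩ := exists_ne_zero_of_sum_ne_zero h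
  by_cases hX : X ω = s
  · exact ⟨ω, by simpa [hX] using hω, hX⟩
  · simp [hX] at hω

theorem sum_dist_mul [Fintype S] (X : Ω → S) (h : S → ℝ) :
    ∑ s, dist p X s * h s = ∑ ω, p ω * h (X ω) := by
  simp only [_root_.dist, sum_mul, ite_mul, zero_mul]
  rw [sum_comm]
  simp

theorem ent_eq_neg_sum [Fintype S] (X : Ω → S) :
    ent p X = -∑ ω, p ω * log (dist p X (X ω)) := by
  rw [ent, sum_dist_mul]

theorem sum_dist_prod_left [Fintype S] (X : Ω → S) (Y : Ω → T) (t : T) :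
    ∑ s, dist p (fun ω => (X ω, Y ω)) (s, t) = dist p Y t := by
  simp only [_root_.dist]
  rw [sum_comm]
  simp [Prod.ext_iff, ite_and]

theorem sum_dist_prod_mid [Fintype T] (X : Ω → S) (Y : Ω → T) (Z : Ω → V) (s : S) (v : V) :
    ∑ t, dist p (fun ω => (X ω, Y ω, Z ω)) (s, t, v) = dist p (fun ω => (X ω, Z ω)) (s, v) := by
  simp only [_root_.dist]
  rw [sum_comm]
  simp [Prod.ext_iff, ite_and]

end Dist

section CondMutInfo

variable {Ω S T V : Type*} [Fintype Ω] [Fintype S] [Fintype T] (p : Ω → ℝ)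
  (X : Ω → S) (Y : Ω → T) (Z : Ω → V)

omit [Fintype S] in
theorem margXZ_dist : margXZ (dist p fun ω => (X ω, Y ω, Z ω)) = dist p fun ω => (X ω, Z ω) :=
  funext fun x => sum_dist_prod_mid p X Y Z x.1 x.2

omit [Fintype T] in
theorem margYZ_dist : margYZ (dist p fun ω => (X ω, Y ω, Z ω)) = dist p fun ω => (Y ω, Z ω) :=
  funext fun x => sum_dist_prod_left p X (fun ω => (Y ω, Z ω)) x

theorem margZ_dist : margZ (dist p fun ω => (X ω, Y ω, Z ω)) = dist p Z := by
  funext v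
  rw [← sum_dist_prod_left p X Z v, ← margXZ_dist p X Y Z]
  rfl

theorem condMutInfo_eq_klDiv [Fintype V] (hp : ∀ ω, 0 ≤ p ω) :
    condMutInfo p X Y Z = klDiv (dist p fun ω => (X ω, Y ω, Z ω))
      (condIndepCoupling (dist p fun ω => (X ω, Y ω, Z ω))) := by
  rw [klDiv_condIndepCoupling (dist_nonneg_of_nonneg p hp _), margXZ_dist, margYZ_dist,
    margZ_dist, sum_dist_mul]
  simp only [condMutInfo, ent_eq_neg_sum, mul_add, mul_sub, sum_add_distrib, sum_sub_distrib]
  ring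

theorem exists_splice_of_condMutInfo_eq_zero [Fintype V] (hp : ∀ ω, 0 ≤ p ω)
    (h : condMutInfo p X Y Z = 0) {ω ω' : Ω} (hω : p ω ≠ 0) (hω' : p ω' ≠ 0) (hZ : Z ω = Z ω') :
    ∃ ω'', p ω'' ≠ 0 ∧ X ω'' = X ω ∧ Y ω'' = Y ω' := by
  have hprod := mul_margZ_eq_of_klDiv_eq_zero (dist_nonneg_of_nonneg p hp _)
    (condMutInfo_eq_klDiv p X Y Z hp ▸ h) (X ω) (Y ω') (Z ω)
  rw [margXZ_dist, margYZ_dist] at hprod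
  have hXZ : 0 < dist p (fun ω => (X ω, Z ω)) (X ω, Z ω) :=
    ((hp ω).lt_of_ne' hω).trans_le (le_dist_apply p hp _ ω)
  have hYZ : 0 < dist p (fun ω => (Y ω, Z ω)) (Y ω', Z ω) :=
    hZ ▸ ((hp ω').lt_of_ne' hω').trans_le (le_dist_apply p hp _ ω')
  obtain ⟨ω'', hω'', hsplice⟩ :=
    exists_of_dist_ne_zero p (left_ne_zero_of_mul (hprod ▸ (mul_pos hXZ hYZ).ne'))
  simp only [Prod.mk.injEq] at hsplice
  exact ⟨ω'', hω'', hsplice.1, hsplice.2.1⟩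

end CondMutInfo

theorem exists_aeEq_comp_of_forall_eq {Ω S T : Type*} [Nonempty T] (p : Ω → ℝ) (W : Ω → S)
    (V : Ω → T) (h : ∀ ω ω', p ω ≠ 0 → p ω' ≠ 0 → W ω = W ω' → V ω = V ω') :
    ∃ f : S → T, AEEq p (fun ω => f (W ω)) V := by
  have hV : Function.FactorsThrough (fun ω : {ω // p ω ≠ 0} => V ω) (fun ω => W ω) :=
    fun a b => h a b a.2 b.2
  exact ⟨_, fun ω hω => hV.extend_apply (fun _ => Classical.arbitrary T) ⟨ω, hω⟩⟩

theorem stmt16_general {Ω S1 S2 SW : Type} [Fintype Ω] [Fintype S1] [Fintype S2] [Fintype SW]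
    (p : Ω → ℝ) (hp : IsPMF p) (X1 : Ω → S1) (X2 : Ω → S2)
    (W : Ω → SW)
    (hci : condMutInfo p X1 X2 W = 0) :
    ∀ (T : Type) [Fintype T] (f1 : S1 → T) (f2 : S2 → T),
      AEEq p (fun ω => f1 (X1 ω)) (fun ω => f2 (X2 ω)) →
      ∃ f : SW → T, AEEq p (fun ω => f (W ω)) (fun ω => f1 (X1 ω)) := by
  intro T _ f1 f2 hf
  obtain ⟨ω₀, -, -⟩ := exists_ne_zero_of_sum_ne_zero (hp.2.symm ▸ one_ne_zero : ∑ ω, p ω ≠ 0)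
  have : Nonempty T := ⟨f1 (X1 ω₀)⟩
  refine exists_aeEq_comp_of_forall_eq p W _ fun ω ω' hω hω' hW => ?_
  obtain ⟨ω'', hω'', hX1, hX2⟩ := exists_splice_of_condMutInfo_eq_zero p X1 X2 W hp.1 hci hω hω' hW
  calc f1 (X1 ω) = f1 (X1 ω'') := by rw [hX1]
    _ = f2 (X2 ω'') := hf ω'' hω''
    _ = f2 (X2 ω') := by rw [hX2]
    _ = f1 (X1 ω') := (hf ω' hω').symm

theorem stmt16 {Ω S1 S2 SW : Type} [Fintype Ω] [Fintype S1] [Fintype S2] [Fintype SW]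
    (p : Ω → ℝ) (hp : IsPMF p) (X1 : Ω → S1) (X2 : Ω → S2)
    (W : Ω → SW) (g1 : S1 → SW) (g2 : S2 → SW)
    (hW1 : AEEq p W (fun ω => g1 (X1 ω)))
    (hW2 : AEEq p W (fun ω => g2 (X2 ω)))
    (hci : condMutInfo p X1 X2 W = 0) :
    ∀ (T : Type) [Fintype T] (f1 : S1 → T) (f2 : S2 → T),
      AEEq p (fun ω => f1 (X1 ω)) (fun ω => f2 (X2 ω)) →
      ∃ f : SW → T, AEEq p (fun ω => f (W ω)) (fun ω => f1 (X1 ω)) :=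
  stmt16_general p hp X1 X2 W hci
end
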